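/- For all integers q ≥ p ≥ 2 there exists a constant C > 0 (depending only on p and q) such that for every sufficiently large m there exists a graph G with exactly m edges, which is a disjoint union of cliques, satisfying r(K_{p,q}, G) ≤ C · m^{p/(p+1)}. -/

import Mathlib

open SimpleGraph

/-- `G.ContainsCopy H` means the graph `G` contains a subgraph isomorphic to `H`,
i.e. there is an injective graph homomorphism from `H` into `G`. -/
def SimpleGraph.ContainsCopy {α β : Type*} (G : SimpleGraph α) (H : SimpleGraph β) : Prop :=
  ∃ f : H →g G, Function.Injective f

/-- `RamseyProp n H G` : every graph `Γ` on `n` vertices contains a copy of `H`,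
or its complement contains a copy of `G`. -/
def RamseyProp {α β : Type*} (n : ℕ) (H : SimpleGraph α) (G : SimpleGraph β) : Prop :=
  ∀ Γ : SimpleGraph (Fin n), Γ.ContainsCopy H ∨ Γᶜ.ContainsCopy G

/-- The Ramsey number `r(H, G)` : the least positive `n` such that every graph on `n`
vertices contains a copy of `H` or its complement contains a copy of `G`. -/
noncomputable def ramseyNumber {α β : Type*} (H : SimpleGraph α) (G : SimpleGraph β) : ℕ :=
  sInf {n : ℕ | 0 < n ∧ RamseyProp n H G}

/-!
Let `s ≈ m^(1/(p+1))` and let `G` consist of `⌊m / C(s,2)⌋` copies of `K_s` and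
`m mod C(s,2)` single edges, so that `G` has `m` edges and `O(s^p)` vertices.
A `K_{p,q}`-free graph on `n` vertices is `D`-degenerate as soon as
`(q-1) n^(p-1) < (D+2-p)^p`, by the Kővári–Sós–Turán double count of `p`-sets of common
neighbours. Greedily discarding a vertex of low degree together with its neighbours then
yields an independent set of size `s` inside any `s (D+1)` vertices, so one independent set
per clique of `G` can be peeled off as long as `s (D+1)` vertices remain. For
`n = (K s)^p` and `D = q (K s)^(p-1) + p`, with `K` large in terms of `p` and `q`, both
requirements hold, hence `r(K_{p,q}, G) ≤ K^p s^p ≤ K^p m^(p/(p+1))`.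
-/

open Finset Function

theorem Nat.pow_sub_le_mul_pow_of_mul_choose_le {a b p q : ℕ} (hp : 1 ≤ p) (ha : 0 < a)
    (h : a * (b + 1).choose p ≤ a.choose p * q) : (b + 2 - p) ^ p ≤ q * a ^ (p - 1) := by
  have hb : (b + 2 - p) ^ p ≤ p.factorial * (b + 1).choose p := by
    rw [← Nat.descFactorial_eq_factorial_mul_choose]
    exact Nat.pow_sub_le_descFactorial (b + 1) p
  have ha' : p.factorial * a.choose p ≤ a ^ (p - 1) * a := by
    rw [← Nat.descFactorial_eq_factorial_mul_choose, ← pow_succ, Nat.sub_add_cancel hp]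
    exact Nat.descFactorial_le_pow a p
  refine Nat.le_of_mul_le_mul_left ?_ ha
  calc a * (b + 2 - p) ^ p ≤ a * (p.factorial * (b + 1).choose p) := Nat.mul_le_mul_left a hb
    _ = p.factorial * (a * (b + 1).choose p) := by ring
    _ ≤ p.factorial * (a.choose p * q) := Nat.mul_le_mul_left _ h
    _ = p.factorial * a.choose p * q := by ring
    _ ≤ a ^ (p - 1) * a * q := Nat.mul_le_mul_right q ha'
    _ = a * (q * a ^ (p - 1)) := by ring

namespace SimpleGraph

variable {V : Type*}

theorem containsCopy_iff_isContained {α : Type*} {G : SimpleGraph V} {H : SimpleGraph α} :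
    G.ContainsCopy H ↔ H ⊑ G :=
  ⟨fun ⟨f, hf⟩ => ⟨⟨f, hf⟩⟩, fun ⟨f⟩ => ⟨f.toHom, f.injective⟩⟩

def Degenerate (G : SimpleGraph V) [DecidableRel G.Adj] (d : ℕ) : Prop :=
  ∀ A : Finset V, A.Nonempty → ∃ v ∈ A, #{w ∈ A | G.Adj v w} ≤ d

section KovariSosTuran

variable (G : SimpleGraph V) [DecidableRel G.Adj] {p q : ℕ}

theorem card_commonNeighbors_lt (hG : ¬completeBipartiteGraph (Fin p) (Fin q) ⊑ G)
    (A : Finset V) {S : Finset V} (hS : #S = p) : #{v ∈ A | ∀ u ∈ S, G.Adj v u} < q := by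
  by_contra! h
  obtain ⟨T, hTA, hT⟩ := exists_subset_card_eq h
  refine hG (completeBipartiteGraph_isContained_iff.2 ⟨S, T, by simpa, by simpa, ?_⟩)
  intro u hu v hv
  exact ((mem_filter.1 (hTA hv)).2 u hu).symm

theorem card_mul_choose_le_of_not_isContained
    (hG : ¬completeBipartiteGraph (Fin p) (Fin q) ⊑ G) {A : Finset V} {D : ℕ}
    (hA : ∀ v ∈ A, D < #{w ∈ A | G.Adj v w}) :
    #A * (D + 1).choose p ≤ (#A).choose p * (q - 1) := by
  rw [← card_powersetCard]
  refine card_mul_le_card_mul (fun v S => ∀ u ∈ S, G.Adj v u) (fun v hv => ?_) (fun S hS => ?_)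
  · calc (D + 1).choose p ≤ (#{w ∈ A | G.Adj v w}).choose p := Nat.choose_le_choose p (hA v hv)
      _ = #(powersetCard p {w ∈ A | G.Adj v w}) := (card_powersetCard _ _).symm
      _ ≤ _ := card_le_card fun S hS => by
        obtain ⟨hSN, hSp⟩ := mem_powersetCard.1 hS
        exact (mem_bipartiteAbove _).2 ⟨mem_powersetCard.2 ⟨hSN.trans (filter_subset _ _), hSp⟩,
          fun u hu => (mem_filter.1 (hSN hu)).2⟩
  · exact Nat.le_sub_one_of_lt (G.card_commonNeighbors_lt hG A (mem_powersetCard.1 hS).2)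

theorem degenerate_of_not_isContained [Fintype V] (hp : 1 ≤ p)
    (hG : ¬completeBipartiteGraph (Fin p) (Fin q) ⊑ G) {D : ℕ}
    (hD : (q - 1) * Fintype.card V ^ (p - 1) < (D + 2 - p) ^ p) : G.Degenerate D := by
  intro A hA
  by_contra! h
  have hA := Nat.pow_sub_le_mul_pow_of_mul_choose_le hp hA.card_pos
    (G.card_mul_choose_le_of_not_isContained hG h)
  have hcard : #A ^ (p - 1) ≤ Fintype.card V ^ (p - 1) := Nat.pow_le_pow_left (card_le_univ A) _
  exact hD.not_ge (hA.trans (Nat.mul_le_mul_left _ hcard))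

end KovariSosTuran

section IndepSets

variable [DecidableEq V] {G : SimpleGraph V} [DecidableRel G.Adj] {D : ℕ}

theorem Degenerate.exists_isIndepSet (hG : G.Degenerate D) (c : ℕ) {A : Finset V}
    (hA : c * (D + 1) ≤ #A) : ∃ I ⊆ A, #I = c ∧ G.IsIndepSet (I : Set V) := by
  induction c generalizing A with
  | zero => exact ⟨∅, empty_subset A, card_empty, by simp⟩
  | succ c ih =>
    rw [Nat.succ_mul] at hA
    obtain ⟨v, hvA, hv⟩ := hG A (card_pos.1 (by omega))
    set N := insert v {w ∈ A | G.Adj v w}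
    have hN : #N ≤ D + 1 := (card_insert_le _ _).trans (by omega)
    obtain ⟨I, hIA, hI, hIind⟩ := ih (A := A \ N) (by have := le_card_sdiff N A; omega)
    have hIN : ∀ w ∈ I, w ∉ N := fun w hw => (mem_sdiff.1 (hIA hw)).2
    have hvI : v ∉ I := fun hv => hIN v hv (mem_insert_self _ _)
    refine ⟨insert v I, insert_subset hvA (hIA.trans sdiff_subset),
      by rw [card_insert_of_notMem hvI, hI], ?_⟩
    rw [coe_insert]
    refine hIind.insert fun w hw _ => ?_
    have hvw : ¬G.Adj v w := fun h =>
      hIN w hw (mem_insert_of_mem (mem_filter.2 ⟨(mem_sdiff.1 (hIA hw)).1, h⟩))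
    exact ⟨hvw, fun h => hvw h.symm⟩

theorem Degenerate.exists_pairwiseDisjoint_isIndepSet [Fintype V] {ι : Type*} {s : ℕ}
    (hG : G.Degenerate D) (c : ι → ℕ) (S : Finset ι) (hc : ∀ i ∈ S, c i ≤ s)
    (hS : ∑ i ∈ S, c i + s * (D + 1) ≤ Fintype.card V) :
    ∃ I : ι → Finset V, (∀ i ∈ S, #(I i) = c i ∧ G.IsIndepSet (I i : Set V)) ∧
      (S : Set ι).PairwiseDisjoint I := by
  classical
  induction S using Finset.induction_on with
  | empty => exact ⟨fun _ => ∅, by simp, by simp⟩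
  | insert a S ha ih =>
    rw [sum_insert ha] at hS
    obtain ⟨I, hI, hdisj⟩ := ih (fun i hi => hc i (mem_insert_of_mem hi)) (by omega)
    have hB : c a * (D + 1) ≤ #(univ \ S.biUnion I) := by
      have h₁ : #(S.biUnion I) ≤ ∑ i ∈ S, c i :=
        card_biUnion_le.trans (sum_le_sum fun i hi => (hI i hi).1.le)
      have h₂ := le_card_sdiff (S.biUnion I) univ
      have h₃ := Nat.mul_le_mul_right (D + 1) (hc a (mem_insert_self a S))
      rw [card_univ] at h₂
      omega
    obtain ⟨J, hJB, hJ, hJind⟩ := hG.exists_isIndepSet (c a) hB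
    have hupd : ∀ i ∈ S, update I a J i = I i := fun i hi =>
      update_of_ne (ne_of_mem_of_not_mem hi ha) _ _
    refine ⟨update I a J, fun i hi => ?_, ?_⟩
    · rcases mem_insert.1 hi with rfl | hi
      · simpa using ⟨hJ, hJind⟩
      · rw [hupd i hi]
        exact hI i hi
    · rw [coe_insert]
      refine (hdisj.mono_on fun i hi => (hupd i hi).le).insert_of_notMem ha fun j hj => ?_
      rw [update_self, hupd j hj]
      exact disjoint_sdiff_self_left.mono hJB (subset_biUnion_of_mem I hj)

end IndepSets

section cliqueUnion

variable {ι : Type*} {c : ι → ℕ}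

def cliqueUnion (c : ι → ℕ) : SimpleGraph (Σ i, Fin (c i)) :=
  (completeMultipartiteGraph fun i => Fin (c i))ᶜ

@[simp]
theorem cliqueUnion_adj {x y : Σ i, Fin (c i)} :
    (cliqueUnion c).Adj x y ↔ x ≠ y ∧ x.1 = y.1 := by
  simp [cliqueUnion]

instance [DecidableEq ι] : DecidableRel (cliqueUnion c).Adj :=
  fun _ _ => decidable_of_iff _ cliqueUnion_adj.symm

theorem cliqueUnion_adj_of_reachable {x y : Σ i, Fin (c i)} (h : (cliqueUnion c).Reachable x y)
    (hne : x ≠ y) : (cliqueUnion c).Adj x y := by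
  refine cliqueUnion_adj.2 ⟨hne, ?_⟩
  clear hne
  obtain ⟨w⟩ := h
  induction w with
  | nil => rfl
  | cons h _ ih => exact (cliqueUnion_adj.1 h).2.trans ih

theorem cliqueUnion_isContained_compl {G : SimpleGraph V} (c : ι → ℕ) (I : ι → Finset V)
    (hI : ∀ i, #(I i) = c i ∧ G.IsIndepSet (I i : Set V)) (hdisj : Pairwise (Disjoint on I)) :
    cliqueUnion c ⊑ Gᶜ := by
  let e : ∀ i, Fin (c i) ≃ I i := fun i => ((I i).equivFinOfCardEq (hI i).1).symm
  let f : (Σ i, Fin (c i)) → V := fun x => e x.1 x.2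
  have hf : Injective f := by
    rintro ⟨i, x⟩ ⟨j, y⟩ (hxy : (e i x : V) = e j y)
    obtain rfl | hij := eq_or_ne i j
    · exact congrArg _ ((e i).injective (Subtype.ext hxy))
    · exact (Finset.disjoint_left.1 (hdisj hij) (e i x).2 (hxy ▸ (e j y).2)).elim
  refine ⟨⟨⟨f, fun {x y} hxy => ?_⟩, hf⟩⟩
  obtain ⟨hne, hxy⟩ := cliqueUnion_adj.1 hxy
  obtain ⟨i, x⟩ := x
  obtain ⟨j, y⟩ := y
  obtain rfl : i = j := hxy
  have hfne : f ⟨i, x⟩ ≠ f ⟨i, y⟩ := hf.ne hne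
  exact (compl_adj _ _ _).2 ⟨hfne, (hI i).2 (e i x).2 (e i y).2 hfne⟩

variable [Fintype ι] [DecidableEq ι]

theorem neighborFinset_cliqueUnion (i : ι) (x : Fin (c i)) :
    (cliqueUnion c).neighborFinset ⟨i, x⟩ =
      (univ.erase x).map (.sigmaMk (β := fun i => Fin (c i)) i) := by
  ext z
  simp only [mem_neighborFinset, cliqueUnion_adj, mem_map, mem_erase, mem_univ, and_true,
    Embedding.sigmaMk_apply]
  constructor
  · obtain ⟨j, y⟩ := z
    rintro ⟨hne, rfl : i = j⟩
    exact ⟨y, fun h => hne (h ▸ rfl), rfl⟩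
  · rintro ⟨y, hyx, rfl⟩
    exact ⟨fun h => hyx (sigma_mk_injective h).symm, rfl⟩

theorem ncard_edgeSet_cliqueUnion : (cliqueUnion c).edgeSet.ncard = ∑ i, (c i).choose 2 := by
  rw [← coe_edgeFinset, Set.ncard_coe_finset, ← mul_right_inj' two_ne_zero,
    ← sum_degrees_eq_twice_card_edges, Fintype.sum_sigma, mul_sum]
  refine sum_congr rfl fun i _ => ?_
  simp only [← card_neighborFinset_eq_degree, neighborFinset_cliqueUnion, card_map,
    card_erase_of_mem (mem_univ _), card_univ, Fintype.card_fin, sum_const, smul_eq_mul]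
  rw [Nat.choose_two_right, Nat.mul_div_cancel' (c i).even_mul_pred_self.two_dvd]

end cliqueUnion

end SimpleGraph

theorem ramseyNumber_le_of_ramseyProp {α β : Type*} {H : SimpleGraph α} {G : SimpleGraph β}
    {n : ℕ} (hn : 0 < n) (h : RamseyProp n H G) : ramseyNumber H G ≤ n :=
  Nat.sInf_le ⟨hn, h⟩

theorem ramseyProp_cliqueUnion {ι : Type*} [Fintype ι] {p q n D s : ℕ} (c : ι → ℕ) (hp : 1 ≤ p)
    (hc : ∀ i, c i ≤ s) (hn : ∑ i, c i + s * (D + 1) ≤ n)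
    (hD : (q - 1) * n ^ (p - 1) < (D + 2 - p) ^ p) :
    RamseyProp n (completeBipartiteGraph (Fin p) (Fin q)) (cliqueUnion c) := by
  classical
  intro Γ
  rw [containsCopy_iff_isContained, containsCopy_iff_isContained]
  refine or_iff_not_imp_left.2 fun hΓ => ?_
  have hdeg := Γ.degenerate_of_not_isContained hp hΓ (by simpa using hD)
  obtain ⟨I, hI, hdisj⟩ :=
    hdeg.exists_pairwiseDisjoint_isIndepSet c univ (fun i _ => hc i) (by simpa using hn)
  exact cliqueUnion_isContained_compl c I (fun i => hI i (mem_univ i))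
    fun i j hij => hdisj (mem_univ i) (mem_univ j) hij

def cliqueSizes (m s : ℕ) : Fin (m / s.choose 2) ⊕ Fin (m % s.choose 2) → ℕ :=
  Sum.elim (fun _ => s) (fun _ => 2)

section cliqueSizes

variable {m s p : ℕ}

theorem cliqueSizes_le (hs : 2 ≤ s) (i) : cliqueSizes m s i ≤ s := by
  cases i <;> simp [cliqueSizes, hs]

theorem sum_choose_two_cliqueSizes : ∑ i, (cliqueSizes m s i).choose 2 = m := by
  simp [cliqueSizes, Fintype.sum_sum_type, Nat.div_add_mod']

theorem sum_cliqueSizes_le (hp : 2 ≤ p) (hs : 2 ≤ s) (hm : m < (s + 1) ^ (p + 1)) :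
    ∑ i, cliqueSizes m s i ≤ (2 ^ (p + 3) + 1) * s ^ p := by
  simp only [cliqueSizes, Fintype.sum_sum_type, Sum.elim_inl, Sum.elim_inr, sum_const, card_univ,
    Fintype.card_fin, smul_eq_mul]
  set k := m / s.choose 2
  set r := m % s.choose 2
  have hT : 2 * s.choose 2 = s * (s - 1) := by
    rw [Nat.choose_two_right, Nat.mul_div_cancel' s.even_mul_pred_self.two_dvd]
  have hkT : k * s.choose 2 ≤ m := Nat.div_mul_le_self m _
  have hr : r < s.choose 2 := Nat.mod_lt _ (Nat.choose_pos hs)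
  have hm' : m < 2 ^ (p + 1) * s ^ (p + 1) := by
    calc m < (s + 1) ^ (p + 1) := hm
      _ ≤ (2 * s) ^ (p + 1) := Nat.pow_le_pow_left (by omega) _
      _ = _ := mul_pow ..
  have hks : k * s < 2 ^ (p + 3) * s ^ p := by
    refine Nat.lt_of_mul_lt_mul_right (a := s) ?_
    calc k * s * s ≤ k * s * (2 * (s - 1)) := Nat.mul_le_mul_left _ (by omega)
      _ = 4 * (k * s.choose 2) := by
          rw [show k * s * (2 * (s - 1)) = 2 * k * (s * (s - 1)) by ring, ← hT]; ring
      _ ≤ 4 * m := by omega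
      _ < 4 * (2 ^ (p + 1) * s ^ (p + 1)) := by omega
      _ = 2 ^ (p + 3) * s ^ p * s := by ring
  have hr2 : r * 2 ≤ s ^ p := by
    calc r * 2 ≤ s * s := by
          have := Nat.mul_le_mul_left s (Nat.sub_le s 1)
          omega
      _ = s ^ 2 := (sq s).symm
      _ ≤ s ^ p := Nat.pow_le_pow_right (by omega) hp
  linarith

end cliqueSizes

theorem ramseyNumber_cliqueUnion_cliqueSizes_le {m s p q : ℕ} (hp : 2 ≤ p) (hs : 2 ≤ s)
    (hm : m < (s + 1) ^ (p + 1)) :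
    ramseyNumber (completeBipartiteGraph (Fin p) (Fin q)) (cliqueUnion (cliqueSizes m s)) ≤
      ((q + 2 ^ (p + 3) + p + 2) * s) ^ p := by
  set K := q + 2 ^ (p + 3) + p + 2
  set t := K * s
  have hp1 : p - 1 + 1 = p := by omega
  refine ramseyNumber_le_of_ramseyProp (by positivity)
    (ramseyProp_cliqueUnion (D := q * t ^ (p - 1) + p) _ (by omega) (cliqueSizes_le hs) ?_ ?_)
  · have hV := sum_cliqueSizes_le hp hs hm
    have hsp : s ≤ s ^ p := Nat.le_self_pow (by omega) s
    have hb : 0 < K ^ (p - 1) := by positivity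
    have hst : s * t ^ (p - 1) = K ^ (p - 1) * s ^ p := by
      rw [mul_pow, show s ^ p = s ^ (p - 1) * s by rw [← pow_succ, hp1]]; ring
    calc ∑ i, cliqueSizes m s i + s * (q * t ^ (p - 1) + p + 1)
        ≤ (2 ^ (p + 3) + 1) * s ^ p + q * (K ^ (p - 1) * s ^ p) + (p + 1) * s := by
          rw [← hst]; nlinarith
      _ ≤ K * K ^ (p - 1) * s ^ p := by
          have hK : K * K ^ (p - 1) * s ^ p =
              q * (K ^ (p - 1) * s ^ p) + (2 ^ (p + 3) + p + 2) * K ^ (p - 1) * s ^ p := by ring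
          nlinarith [Nat.mul_le_mul_left (p + 1) hsp,
            Nat.mul_le_mul_right ((2 ^ (p + 3) + p + 2) * s ^ p) hb]
      _ = t ^ p := by rw [mul_pow, ← pow_succ', hp1]
  · calc (q - 1) * (t ^ p) ^ (p - 1) ≤ q ^ p * (t ^ (p - 1)) ^ p := by
          rw [← pow_mul, ← pow_mul, mul_comm p]
          exact Nat.mul_le_mul_right _ ((Nat.sub_le q 1).trans (Nat.le_self_pow (by omega) q))
      _ = (q * t ^ (p - 1)) ^ p := (mul_pow ..).symm
      _ < (q * t ^ (p - 1) + p + 2 - p) ^ p := Nat.pow_lt_pow_left (by omega) (by omega)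

theorem Nat.exists_pow_succ_le_lt_pow_succ {m p : ℕ} (hm : 2 ^ (p + 1) ≤ m) :
    ∃ s, 2 ≤ s ∧ s ^ (p + 1) ≤ m ∧ m < (s + 1) ^ (p + 1) :=
  ⟨Nat.findGreatest (fun s => s ^ (p + 1) ≤ m) m,
    Nat.le_findGreatest ((Nat.le_self_pow (by omega) 2).trans hm) hm,
    Nat.findGreatest_spec (P := fun s => s ^ (p + 1) ≤ m) (Nat.zero_le m) (by simp),
    lt_of_not_ge fun h => Nat.findGreatest_is_greatest (lt_add_one _)
      ((Nat.le_self_pow (by omega) _).trans h) h⟩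

theorem Nat.cast_pow_le_rpow_of_pow_succ_le {m s p : ℕ} (h : s ^ (p + 1) ≤ m) :
    (s : ℝ) ^ p ≤ (m : ℝ) ^ ((p : ℝ) / (p + 1)) := by
  have hs : (s : ℝ) ^ p = ((s : ℝ) ^ (p + 1)) ^ ((p : ℝ) / (p + 1)) := by
    rw [← Real.rpow_natCast, ← Real.rpow_natCast, ← Real.rpow_mul (by positivity)]
    congr 1
    push_cast
    field_simp
  rw [hs]
  exact Real.rpow_le_rpow (by positivity) (by exact_mod_cast h) (by positivity)

theorem stmt_13_general (p q : ℕ) (hp : 2 ≤ p) :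
    ∃ C : ℝ, 0 < C ∧ ∃ M : ℕ, ∀ m : ℕ, M ≤ m →
      ∃ (β : Type) (_ : Fintype β) (G : SimpleGraph β),
        G.edgeSet.ncard = m ∧
        (∀ u v, G.Reachable u v → u ≠ v → G.Adj u v) ∧
        (ramseyNumber (completeBipartiteGraph (Fin p) (Fin q)) G : ℝ) ≤
          C * (m : ℝ) ^ ((p : ℝ) / (p + 1)) := by
  set K := q + 2 ^ (p + 3) + p + 2
  refine ⟨(K : ℝ) ^ p, by positivity, 2 ^ (p + 1), fun m hm => ?_⟩
  obtain ⟨s, hs, hsm, hms⟩ := Nat.exists_pow_succ_le_lt_pow_succ hm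
  refine ⟨_, inferInstance, cliqueUnion (cliqueSizes m s), ?_,
    fun _ _ => cliqueUnion_adj_of_reachable, ?_⟩
  · rw [ncard_edgeSet_cliqueUnion, sum_choose_two_cliqueSizes]
  · calc (ramseyNumber (completeBipartiteGraph (Fin p) (Fin q)) (cliqueUnion (cliqueSizes m s)) : ℝ)
        ≤ (((K * s) ^ p : ℕ) : ℝ) := by
          exact_mod_cast ramseyNumber_cliqueUnion_cliqueSizes_le hp hs hms
      _ = (K : ℝ) ^ p * (s : ℝ) ^ p := by push_cast; ring
      _ ≤ (K : ℝ) ^ p * (m : ℝ) ^ ((p : ℝ) / (p + 1)) := by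
          gcongr
          exact Nat.cast_pow_le_rpow_of_pow_succ_le hsm

theorem stmt_13 (p q : ℕ) (hp : 2 ≤ p) (hpq : p ≤ q) :
    ∃ C : ℝ, 0 < C ∧ ∃ M : ℕ, ∀ m : ℕ, M ≤ m →
      ∃ (β : Type) (_ : Fintype β) (G : SimpleGraph β),
        G.edgeSet.ncard = m ∧
        (∀ u v, G.Reachable u v → u ≠ v → G.Adj u v) ∧
        (ramseyNumber (completeBipartiteGraph (Fin p) (Fin q)) G : ℝ) ≤
          C * (m : ℝ) ^ ((p : ℝ) / (p + 1)) :=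
  stmt_13_general p q hp
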